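/- Let β ∈ (0, 0.1]. Define the cone K^u_β ⊂ ℝ² as the set of vectors c₁(1,−β)ᵀ + c₂(1,1+2β)ᵀ with c₁c₂ ≥ 0. Then for every natural number a ≥ 1, A_a maps K^u_β into the interior of K^u_β (union {0}), where A_a = [[a,1],[1,0]]. -/

import Mathlib

/-- The cone `K^u_β = { c₁(1,−β) + c₂(1,1+2β) : c₁c₂ ≥ 0 } ⊂ ℝ²`. -/
def Ku (β : ℝ) : Set (Fin 2 → ℝ) :=
  {v | ∃ c₁ c₂ : ℝ, c₁ * c₂ ≥ 0 ∧ v = c₁ • ![1, -β] + c₂ • ![1, 1 + 2 * β]}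

/-!
In the coordinates `c₁, c₂` with respect to `e₁ = (1, -β)`, `e₂ = (1, 1 + 2β)`, the closed cone
`K^u_β` is `{c₁ c₂ ≥ 0}`, and the open set `{c₁ c₂ > 0}` lies in its interior. The matrix `A_a`
sends `e₁` and `e₂` to vectors with both coordinates strictly positive (for `e₁` this needs
`β < 1/2`), so the image of a nonzero `v = c₁ e₁ + c₂ e₂` with `c₁ c₂ ≥ 0` has coordinates of one
strict sign.
-/

/-- Its two factors are `(1 + 3β) c₁` and `(1 + 3β) c₂`. -/
def kuForm (β : ℝ) (v : Fin 2 → ℝ) : ℝ :=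
  ((1 + 2 * β) * v 0 - v 1) * (v 1 + β * v 0)

lemma continuous_kuForm (β : ℝ) : Continuous (kuForm β) := by
  unfold kuForm
  fun_prop

lemma mem_Ku_of_kuForm_nonneg {β : ℝ} (hβ : 1 + 3 * β ≠ 0) {v : Fin 2 → ℝ}
    (hv : 0 ≤ kuForm β v) : v ∈ Ku β := by
  refine ⟨((1 + 2 * β) * v 0 - v 1) / (1 + 3 * β), (v 1 + β * v 0) / (1 + 3 * β), ?_, ?_⟩
  · rw [div_mul_div_comm]
    exact div_nonneg hv (mul_self_nonneg _)
  · ext i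
    have hβ' : 1 + β * 3 ≠ 0 := by rwa [mul_comm]
    fin_cases i <;> simp <;> field_simp <;> ring

lemma mem_interior_Ku_of_kuForm_pos {β : ℝ} (hβ : 1 + 3 * β ≠ 0) {v : Fin 2 → ℝ}
    (hv : 0 < kuForm β v) : v ∈ interior (Ku β) :=
  interior_maximal (fun _ hw => mem_Ku_of_kuForm_nonneg hβ (le_of_lt hw))
    (isOpen_lt continuous_const (continuous_kuForm β)) hv

lemma mul_pos_of_mul_nonneg_of_ne_zero {α : Type*} [Field α] [LinearOrder α]
    [IsStrictOrderedRing α] {c₁ c₂ p₁ p₂ q₁ q₂ : α} (hc : 0 ≤ c₁ * c₂) (hne : c₁ ≠ 0 ∨ c₂ ≠ 0)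
    (hp₁ : 0 < p₁) (hp₂ : 0 < p₂) (hq₁ : 0 < q₁) (hq₂ : 0 < q₂) :
    0 < (c₁ * p₁ + c₂ * q₁) * (c₁ * p₂ + c₂ * q₂) := by
  have hsq : 0 < c₁ ^ 2 * (p₁ * p₂) + c₂ ^ 2 * (q₁ * q₂) := by
    rcases hne with h | h
    · have : 0 < c₁ ^ 2 * (p₁ * p₂) := by positivity
      have : 0 ≤ c₂ ^ 2 * (q₁ * q₂) := by positivity
      linarith
    · have : 0 ≤ c₁ ^ 2 * (p₁ * p₂) := by positivity
      have : 0 < c₂ ^ 2 * (q₁ * q₂) := by positivity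
      linarith
  have hcross : 0 ≤ c₁ * c₂ * (p₁ * q₂ + q₁ * p₂) := by positivity
  nlinarith

theorem stmt2 (β : ℝ) (hβ : β ∈ Set.Ioc (0 : ℝ) 0.1) (a : ℕ) (ha : 1 ≤ a)
    (v : Fin 2 → ℝ) (hv : v ∈ Ku β) :
    (!![(a : ℝ), 1; 1, 0]).mulVec v ∈ interior (Ku β) ∪ {0} := by
  obtain ⟨hβ₀, hβ₁⟩ := hβ
  have ha' : (1 : ℝ) ≤ a := by exact_mod_cast ha
  obtain ⟨c₁, c₂, hc, rfl⟩ := hv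
  by_cases hzero : c₁ = 0 ∧ c₂ = 0
  · right
    simp [hzero.1, hzero.2]
  left
  refine mem_interior_Ku_of_kuForm_pos (by linarith) ?_
  have hform : kuForm β (!![(a : ℝ), 1; 1, 0].mulVec (c₁ • ![1, -β] + c₂ • ![1, 1 + 2 * β])) =
      (c₁ * ((1 + 2 * β) * (a - β) - 1) + c₂ * ((1 + 2 * β) * (a + 1 + 2 * β) - 1)) *
        (c₁ * (1 + β * (a - β)) + c₂ * (1 + β * (a + 1 + 2 * β))) := by
    simp [kuForm, Matrix.mulVec, dotProduct, Fin.sum_univ_two]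
    ring
  rw [hform]
  refine mul_pos_of_mul_nonneg_of_ne_zero hc (not_and_or.mp hzero) ?_ ?_ ?_ ?_ <;>
    nlinarith [show (β : ℝ) ≤ 0.1 from hβ₁]
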